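/- arXiv:2403.02190 — 2 statements merged into one kernel-verified Lean document; each statement's English description precedes it below -/
import Mathlib

section
/- Let L ∈ ℝ^{n×n} be symmetric positive definite, c ∈ ℝ^n, F ∈ ℝ^{m×n}, l ∈ ℝ^m, let S ∈ ℝ^{q×(n+m+1)}, and define the affine controller κ(x) = K(x − c) + l with K = F L⁻¹ and the stage cost 𝒥(x,u) = (xᵀ, uᵀ, 1) Q (xᵀ, uᵀ, 1)ᵀ where Q = SᵀS. Let M ∈ ℝ^{(n+m+1)×n} be the stacked matrix with blocks L, F, and the zero row (i.e., Mz = (Lz; Fz; 0)) and let v = (c; l; 1) ∈ ℝ^{n+m+1}. If there exist γ ≥ 0 and 𝒥̃ ∈ ℝ such that the block matrix [[γ·I_n, 0, (S M)ᵀ],[0, 𝒥̃ − γ, (S v)ᵀ],[S M, S v, I_q]] is positive semidefinite, then 𝒥̃ ≥ 𝒥(x, κ(x)) for every x in the ellipsoid E(c, L⁻²). -/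
open Matrix

noncomputable section

/-- Ellipsoid `E(c, P) = {x : (x−c)ᵀ P (x−c) ≤ 1}`. -/
def Ellip {n : ℕ} (c : Fin n → ℝ) (P : Matrix (Fin n) (Fin n) ℝ) : Set (Fin n → ℝ) :=
  {x | (x - c) ⬝ᵥ P.mulVec (x - c) ≤ 1}

/-- A vector as a single-row matrix. -/
def rowV {q : ℕ} (v : Fin q → ℝ) : Matrix (Fin 1) (Fin q) ℝ := Matrix.of fun _ j => v j

/-- A vector as a single-column matrix. -/
def colV {q : ℕ} (v : Fin q → ℝ) : Matrix (Fin q) (Fin 1) ℝ := Matrix.of fun i _ => v i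

/-- A scalar as a 1×1 matrix. -/
def sc (a : ℝ) : Matrix (Fin 1) (Fin 1) ℝ := Matrix.of fun _ _ => a

/-- 3×3 block matrix. -/
def block3 {n1 n2 n3 : Type*}
    (A11 : Matrix n1 n1 ℝ) (A12 : Matrix n1 n2 ℝ) (A13 : Matrix n1 n3 ℝ)
    (A21 : Matrix n2 n1 ℝ) (A22 : Matrix n2 n2 ℝ) (A23 : Matrix n2 n3 ℝ)
    (A31 : Matrix n3 n1 ℝ) (A32 : Matrix n3 n2 ℝ) (A33 : Matrix n3 n3 ℝ) :
    Matrix ((n1 ⊕ n2) ⊕ n3) ((n1 ⊕ n2) ⊕ n3) ℝ :=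
  fromBlocks (fromBlocks A11 A12 A21 A22) (fromRows A13 A23) (fromCols A31 A32) A33

/-! With `z = L⁻¹ (x - c)` the point `x` lies in the ellipsoid iff `‖z‖ ≤ 1`, the stacked
vector `(x, κ x, 1)` is `M z + v`, and so the stage cost is `‖S M z + S v‖²`. Evaluating the
LMI on `(z, 1, -(S M z + S v))` gives `‖S M z + S v‖² ≤ γ ‖z‖² + 𝒥̃ - γ ≤ 𝒥̃`. -/

section BlockLMI

variable {k : Type*} [Fintype k] [DecidableEq k] {q : ℕ}

lemma dotProduct_block3_mulVec (γ a : ℝ) (G : Matrix (Fin q) k ℝ) (g r : Fin q → ℝ) (z : k → ℝ) :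
    Sum.elim (Sum.elim z 1) r ⬝ᵥ
        (block3 (γ • (1 : Matrix k k ℝ)) 0 Gᵀ 0 (sc a) (rowV g) G (colV g) 1 *ᵥ
          Sum.elim (Sum.elim z 1) r) =
      γ * (z ⬝ᵥ z) + a + 2 * (r ⬝ᵥ (G *ᵥ z + g)) + r ⬝ᵥ r := by
  have hsc : sc a *ᵥ 1 = fun _ => a := by
    funext i; simp [sc, mulVec, dotProduct]
  have hrow : rowV g *ᵥ r = fun _ => g ⬝ᵥ r := by
    funext i; simp [rowV, mulVec, dotProduct]
  have hcol : colV g *ᵥ 1 = g := by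
    funext i; simp [colV, mulVec, dotProduct]
  simp only [block3, fromBlocks_mulVec, fromRows_mulVec, fromCols_mulVec_sumElim,
    sumElim_dotProduct_sumElim, Sum.elim_comp_inl, Sum.elim_comp_inr, hsc, hrow, hcol,
    smul_mulVec, one_mulVec, zero_mulVec, add_zero, zero_add, dotProduct_add,
    dotProduct_smul, smul_eq_mul, dotProduct_mulVec, vecMul_transpose]
  have hone (t : ℝ) : (1 : Fin 1 → ℝ) ⬝ᵥ (fun _ => t) = t := by simp [dotProduct]
  rw [hone, hone, dotProduct_comm (G *ᵥ z), dotProduct_mulVec, dotProduct_comm g]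
  ring

lemma dotProduct_self_le_of_block3_posSemidef {γ a : ℝ} {G : Matrix (Fin q) k ℝ}
    {g : Fin q → ℝ}
    (h : (block3 (γ • (1 : Matrix k k ℝ)) 0 Gᵀ 0 (sc a) (rowV g) G (colV g) 1).PosSemidef)
    (z : k → ℝ) :
    (G *ᵥ z + g) ⬝ᵥ (G *ᵥ z + g) ≤ γ * (z ⬝ᵥ z) + a := by
  have hnonneg := h.dotProduct_mulVec_nonneg (Sum.elim (Sum.elim z 1) (-(G *ᵥ z + g)))
  rw [star_trivial, dotProduct_block3_mulVec] at hnonneg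
  simp only [neg_dotProduct, dotProduct_neg, neg_neg] at hnonneg
  linarith

end BlockLMI

lemma dotProduct_transpose_mul_self_mulVec {R ι κ : Type*} [CommSemiring R] [Fintype ι]
    [Fintype κ] (S : Matrix κ ι R) (w : ι → R) : w ⬝ᵥ (Sᵀ * S) *ᵥ w = (S *ᵥ w) ⬝ᵥ (S *ᵥ w) := by
  rw [← mulVec_mulVec, dotProduct_mulVec, vecMul_transpose]

lemma mem_ellip_sq_inv_iff {n : ℕ} {L : Matrix (Fin n) (Fin n) ℝ} (hL : Lᵀ = L)
    (c x : Fin n → ℝ) :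
    x ∈ Ellip c (L ^ 2)⁻¹ ↔ (L⁻¹ *ᵥ (x - c)) ⬝ᵥ (L⁻¹ *ᵥ (x - c)) ≤ 1 := by
  rw [Ellip, Set.mem_ofPred_eq, pow_two, Matrix.mul_inv_rev, ← mulVec_mulVec, dotProduct_mulVec,
    ← mulVec_transpose, transpose_nonsing_inv, hL]

lemma fromRows_mulVec_nonsing_inv_sub_add {ι μ : Type*} [Fintype ι] [DecidableEq ι]
    {L : Matrix ι ι ℝ} (hL : IsUnit L.det) (F : Matrix μ ι ℝ) (c x : ι → ℝ) (l : μ → ℝ) :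
    fromRows (fromRows L F) (0 : Matrix (Fin 1) ι ℝ) *ᵥ (L⁻¹ *ᵥ (x - c)) +
        Sum.elim (Sum.elim c l) 1 =
      Sum.elim (Sum.elim x ((F * L⁻¹) *ᵥ (x - c) + l)) 1 := by
  rw [fromRows_mulVec, fromRows_mulVec, mulVec_mulVec, mulVec_mulVec, mul_nonsing_inv L hL,
    one_mulVec, zero_mulVec]
  funext i
  rcases i with (i | i) | i <;> simp

/-- **Cost-bound constraint of Corollary 1**: if the cost LMI
`[[γI, 0, (SM)ᵀ],[0, 𝒥̃ − γ, (Sv)ᵀ],[SM, Sv, I]] ⪰ 0` holds (with `M` the stacked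
matrix `(L; F; 0)` and `v = (c; l; 1)`), then `𝒥̃` upper-bounds the quadratic stage
cost `𝒥(x, κ(x))` of the affine controller `κ(x) = F L⁻¹ (x − c) + l` over `E(c, L⁻²)`. -/
theorem cost_bound {n m q : ℕ}
    (L : Matrix (Fin n) (Fin n) ℝ) (hL : L.PosDef)
    (c : Fin n → ℝ) (F : Matrix (Fin m) (Fin n) ℝ) (l : Fin m → ℝ)
    (S : Matrix (Fin q) ((Fin n ⊕ Fin m) ⊕ Fin 1) ℝ)
    (κ : (Fin n → ℝ) → (Fin m → ℝ))
    (hκ : ∀ x, κ x = (F * L⁻¹).mulVec (x - c) + l)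
    (Q : Matrix ((Fin n ⊕ Fin m) ⊕ Fin 1) ((Fin n ⊕ Fin m) ⊕ Fin 1) ℝ)
    (hQ : Q = Sᵀ * S)
    (J : (Fin n → ℝ) → (Fin m → ℝ) → ℝ)
    (hJ : ∀ x u, J x u =
      (Sum.elim (Sum.elim x u) 1) ⬝ᵥ Q.mulVec (Sum.elim (Sum.elim x u) 1))
    (M : Matrix ((Fin n ⊕ Fin m) ⊕ Fin 1) (Fin n) ℝ)
    (hM : M = fromRows (fromRows L F) 0)
    (v : (Fin n ⊕ Fin m) ⊕ Fin 1 → ℝ) (hv : v = Sum.elim (Sum.elim c l) 1)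
    (γ Jt : ℝ) (hγ : 0 ≤ γ)
    (hLMI : (block3 (γ • (1 : Matrix (Fin n) (Fin n) ℝ)) 0 (S * M)ᵀ
        0 (sc (Jt - γ)) (rowV (S.mulVec v))
        (S * M) (colV (S.mulVec v)) (1 : Matrix (Fin q) (Fin q) ℝ)).PosSemidef) :
    ∀ x ∈ Ellip c (L ^ 2)⁻¹, J x (κ x) ≤ Jt := by
  intro x hx
  set z := L⁻¹ *ᵥ (x - c)
  have hz : z ⬝ᵥ z ≤ 1 := (mem_ellip_sq_inv_iff hL.isHermitian.eq c x).1 hx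
  have hw : M *ᵥ z + v = Sum.elim (Sum.elim x (κ x)) 1 := by
    rw [hM, hv, hκ]
    exact fromRows_mulVec_nonsing_inv_sub_add hL.det_pos.ne'.isUnit F c x l
  have hJ' : J x (κ x) = ((S * M) *ᵥ z + S *ᵥ v) ⬝ᵥ ((S * M) *ᵥ z + S *ᵥ v) := by
    rw [hJ, hQ, dotProduct_transpose_mul_self_mulVec, ← hw, mulVec_add, mulVec_mulVec]
  have hbound := dotProduct_self_le_of_block3_posSemidef hLMI z
  rw [hJ']
  linarith [mul_le_mul_of_nonneg_left hz hγ]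
end
end

section
/- Under the hypotheses and notation of Theorem 2 of the paper (linearization-error bound for f around (c, ū, 0) with Lipschitz vector 𝐋, polytopic disturbance set 𝒲 = conv{w_1,…,w_{N_w}} with 0 ∈ 𝒲, input set 𝒰 = ∩_k {u : ‖U_k u‖ ≤ 1}), suppose L ≻ 0, F, l, δX, δU, φ, β_{ij}, τ_k, γ ≥ 0 and 𝒥̃ satisfy the LMIs (16)–(19) together with the cost LMI [[γ·I_n, 0, (S M)ᵀ],[0, 𝒥̃ − γ, (S v)ᵀ],[S M, S v, I_q]] ⪰ 0, where Q = SᵀS defines the stage cost 𝒥(x,u) = (xᵀ,uᵀ,1)Q(xᵀ,uᵀ,1)ᵀ, M is the stacked matrix (L; F; 0) and v = (c; l; 1). Then the affine controller κ(x) = F L⁻¹ (x − c) + l satisfies: (i) 𝒥̃ ≥ max_{x ∈ E(c, L⁻²)} 𝒥(x, κ(x)); (ii) κ(x) ∈ 𝒰 for all x ∈ E(c, L⁻²); and (iii) for all x ∈ E(c, L⁻²) and all w ∈ 𝒲, f(x, κ(x), w) ∈ E(c₊, P₊). -/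
/-!
Put `z = L⁻¹ (x - c)`: then `x ∈ E(c, L⁻²)` means `‖z‖ ≤ 1`, `x = c + L z` and `κ x = F z + l`.
Every LMI of the shape `[[α I, 0, Cᵀ], [0, θ - α, dᵀ], [C, d, W]] ⪰ 0` with `α ≥ 0` gives, by a
Schur complement on `W`, `(C z + d)ᵀ W⁻¹ (C z + d) ≤ α ‖z‖² + θ - α ≤ θ`. This yields the cost
bound, the input constraints, `‖κ x - ū‖² ≤ δU`, and that `c₊ + (A L + B F) z + μ + V_i + E w_j`
lies in `E(c₊, P₊)` for every vertex; (16) gives `‖x - c‖² ≤ δX`. The linearization error at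
`(x, κ x, w)` lies in the box spanned by the `V_i`, and `E w` in the convex hull of the `E w_j`, so
convexity of `E(c₊, P₊)` places `f(x, κ x, w)` in it.
-/

open Matrix Set
open scoped Pointwise

noncomputable section

/-- Euclidean norm on `Fin k → ℝ`. -/
def eunorm {k : ℕ} (v : Fin k → ℝ) : ℝ := Real.sqrt (∑ i, v i ^ 2)

section

variable {ι ι' : Type*} [Fintype ι]

theorem eunorm_sq {k : ℕ} (v : Fin k → ℝ) : eunorm v ^ 2 = v ⬝ᵥ v := by
  rw [eunorm, Real.sq_sqrt (Finset.sum_nonneg fun i _ => sq_nonneg _)]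
  simp only [dotProduct, sq]

theorem eunorm_le_one_of_dotProduct_self_le_one {k : ℕ} {v : Fin k → ℝ} (h : v ⬝ᵥ v ≤ 1) :
    eunorm v ≤ 1 :=
  (pow_le_one_iff_of_nonneg (Real.sqrt_nonneg _) two_ne_zero).mp (eunorm_sq v ▸ h)

theorem dotProduct_self_le_one_of_mem_ellip_inv_sq {n : ℕ} {L : Matrix (Fin n) (Fin n) ℝ}
    (hL : Lᵀ = L) {c x : Fin n → ℝ} (hx : x ∈ Ellip c (L ^ 2)⁻¹) :
    (L⁻¹ *ᵥ (x - c)) ⬝ᵥ (L⁻¹ *ᵥ (x - c)) ≤ 1 := by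
  rwa [dotProduct_mulVec, ← mulVec_transpose, transpose_nonsing_inv, hL, mulVec_mulVec,
    ← Matrix.mul_inv_rev, ← sq, dotProduct_comm]

theorem mulVec_dotProduct_self_le_of_posSemidef_fromBlocks [DecidableEq ι]
    {L : Matrix ι ι ℝ} {δ : ℝ} (hδ : 0 ≤ δ)
    (h : (fromBlocks 1 L L (δ • (1 : Matrix ι ι ℝ))).PosSemidef) {z : ι → ℝ} (hz : z ⬝ᵥ z ≤ 1) :
    (L *ᵥ z) ⬝ᵥ (L *ᵥ z) ≤ δ := by
  have hL : Lᴴ = L := (isHermitian_fromBlocks_iff.mp h.1).2.1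
  have : Invertible (1 : Matrix ι ι ℝ) := invertibleOne
  have hSchur := ((PosDef.fromBlocks₁₁ L _ PosDef.one).mp (by rwa [hL])).dotProduct_mulVec_nonneg z
  rw [inv_one, Matrix.mul_one, sub_mulVec, smul_mulVec, one_mulVec, dotProduct_sub,
    ← mulVec_mulVec, dotProduct_smul, smul_eq_mul, star_trivial, dotProduct_mulVec z,
    ← mulVec_transpose, ← conjTranspose_eq_transpose_of_trivial, conjTranspose_conjTranspose]
    at hSchur
  nlinarith [mul_le_mul_of_nonneg_left hz hδ]

theorem quadForm_inv_le_of_posSemidef_block3 [DecidableEq ι] {k : ℕ} {α θ : ℝ} (hα : 0 ≤ α)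
    {C : Matrix (Fin k) (ι) ℝ} {d : Fin k → ℝ} {W : Matrix (Fin k) (Fin k) ℝ}
    (hW : W.PosDef)
    (h : (block3 (α • 1) 0 Cᵀ 0 (sc (θ - α)) (rowV d) C (colV d) W).PosSemidef)
    {z : ι → ℝ} (hz : z ⬝ᵥ z ≤ 1) :
    (C *ᵥ z + d) ⬝ᵥ W⁻¹ *ᵥ (C *ᵥ z + d) ≤ θ := by
  set B := fromRows Cᵀ (rowV d)
  have hB : fromCols C (colV d) = Bᴴ := by
    rw [conjTranspose_fromRows_eq_fromCols_conjTranspose, conjTranspose_eq_transpose_of_trivial,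
      transpose_transpose]
    rfl
  have : Invertible W := hW.isUnit.invertible
  set v : ι ⊕ Fin 1 → ℝ := Sum.elim z (fun _ => 1)
  have hSchur :=
    ((PosDef.fromBlocks₂₂ _ B hW).mp (by rwa [block3, hB] at h)).dotProduct_mulVec_nonneg v
  have hBv : Bᴴ *ᵥ v = C *ᵥ z + d := by
    rw [← hB, fromCols_mulVec_sumElim]
    congr 1
    ext i
    simp [colV, mulVec, dotProduct]
  have hA : v ⬝ᵥ fromBlocks (α • 1) 0 0 (sc (θ - α)) *ᵥ v = α * (z ⬝ᵥ z) + (θ - α) := by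
    simp only [fromBlocks_mulVec, Sum.elim_comp_inl, smul_mulVec, one_mulVec, Sum.elim_comp_inr,
      zero_mulVec, add_zero, zero_add, sumElim_dotProduct_sumElim, dotProduct_smul, smul_eq_mul,
      add_right_inj, v]
    simp [sc, mulVec, dotProduct]
  have hBWB : v ⬝ᵥ (B * W⁻¹ * Bᴴ) *ᵥ v = (C *ᵥ z + d) ⬝ᵥ W⁻¹ *ᵥ (C *ᵥ z + d) := by
    rw [← mulVec_mulVec, ← mulVec_mulVec, dotProduct_mulVec, ← mulVec_transpose,
      ← conjTranspose_eq_transpose_of_trivial, hBv]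
  rw [star_trivial, sub_mulVec, dotProduct_sub, hA, hBWB] at hSchur
  nlinarith [mul_le_mul_of_nonneg_left hz hα]

theorem dotProduct_self_le_of_posSemidef_block3 [DecidableEq ι] {k : ℕ} {α θ : ℝ} (hα : 0 ≤ α)
    {C : Matrix (Fin k) (ι) ℝ} {d : Fin k → ℝ}
    (h : (block3 (α • 1) 0 Cᵀ 0 (sc (θ - α)) (rowV d) C (colV d) 1).PosSemidef)
    {z : ι → ℝ} (hz : z ⬝ᵥ z ≤ 1) :
    (C *ᵥ z + d) ⬝ᵥ (C *ᵥ z + d) ≤ θ := by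
  simpa using quadForm_inv_le_of_posSemidef_block3 hα PosDef.one h hz

theorem add_mem_ellip_of_posSemidef_block3 [DecidableEq ι] {k : ℕ} {α : ℝ} (hα : 0 ≤ α)
    {C : Matrix (Fin k) (ι) ℝ} {d : Fin k → ℝ} {P : Matrix (Fin k) (Fin k) ℝ}
    (hP : P.PosDef)
    (h : (block3 (α • 1) 0 Cᵀ 0 (sc (1 - α)) (rowV d) C (colV d) P⁻¹).PosSemidef)
    {z : ι → ℝ} (hz : z ⬝ᵥ z ≤ 1) (c : Fin k → ℝ) :
    c + (C *ᵥ z + d) ∈ Ellip c P := by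
  have hq := quadForm_inv_le_of_posSemidef_block3 hα hP.inv h hz
  rw [nonsing_inv_nonsing_inv _ ((isUnit_iff_isUnit_det P).mp hP.isUnit)] at hq
  change (c + (C *ᵥ z + d) - c) ⬝ᵥ P *ᵥ (c + (C *ᵥ z + d) - c) ≤ 1
  rwa [add_sub_cancel_left]

theorem Matrix.PosSemidef.convexOn_dotProduct_mulVec {P : Matrix ι ι ℝ} (hP : P.PosSemidef) :
    ConvexOn ℝ univ fun x : ι → ℝ => x ⬝ᵥ P *ᵥ x := by
  refine ⟨convex_univ, fun x _ y _ a b ha hb hab => ?_⟩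
  have hsymm : y ⬝ᵥ P *ᵥ x = x ⬝ᵥ P *ᵥ y := by
    rw [dotProduct_mulVec, ← mulVec_transpose, ← conjTranspose_eq_transpose_of_trivial, hP.1,
      dotProduct_comm]
  have hgap : a * (x ⬝ᵥ P *ᵥ x) + b * (y ⬝ᵥ P *ᵥ y) - (a • x + b • y) ⬝ᵥ P *ᵥ (a • x + b • y)
      = a * b * ((x - y) ⬝ᵥ P *ᵥ (x - y)) := by
    simp only [mulVec_add, mulVec_sub, mulVec_smul, dotProduct_add, dotProduct_sub, add_dotProduct,
      sub_dotProduct, smul_dotProduct, dotProduct_smul, smul_eq_mul, hsymm]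
    linear_combination (-(a * (x ⬝ᵥ P *ᵥ x) + b * (y ⬝ᵥ P *ᵥ y))) * hab
  have := mul_nonneg (mul_nonneg ha hb) (hP.dotProduct_mulVec_nonneg (x - y))
  rw [star_trivial] at this
  simp only [smul_eq_mul]
  linarith

theorem convex_ellip {n : ℕ} {P : Matrix (Fin n) (Fin n) ℝ} (hP : P.PosSemidef) (c : Fin n → ℝ) :
    Convex ℝ (Ellip c P) := by
  simpa [Ellip, sub_eq_neg_add] using
    (hP.convexOn_dotProduct_mulVec.convex_le 1).translate_preimage_right (-c)

theorem eunorm_sq_le_of_mem_convexHull {k : ℕ} {ν : Type*} {wv : ν → Fin k → ℝ} {δ : ℝ}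
    (hδ : ∀ j, eunorm (wv j) ^ 2 ≤ δ) {w : Fin k → ℝ} (hw : w ∈ convexHull ℝ (range wv)) :
    eunorm w ^ 2 ≤ δ := by
  obtain ⟨_, ⟨j, rfl⟩, hj⟩ :=
    PosSemidef.one.convexOn_dotProduct_mulVec.exists_ge_of_mem_convexHull (subset_univ _) hw
  simp only [one_mulVec] at hj
  rw [eunorm_sq]
  exact hj.trans (eunorm_sq (wv j) ▸ hδ j)

theorem add_add_mem_of_mem_convexHull {E : Type*} [AddCommGroup E] [Module ℝ E] {K : Set E}
    (hK : Convex ℝ K) {y : E} {s t : Set E} (hst : ∀ a ∈ s, ∀ b ∈ t, y + a + b ∈ K) {a b : E}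
    (ha : a ∈ convexHull ℝ s) (hb : b ∈ convexHull ℝ t) : y + a + b ∈ K := by
  have hsub : convexHull ℝ (s + t) ⊆ (fun v => y + v) ⁻¹' K := by
    refine convexHull_min ?_ (hK.translate_preimage_right y)
    rintro _ ⟨a, ha, b, hb, rfl⟩
    simpa only [mem_preimage, add_assoc] using hst a ha b hb
  have hab : a + b ∈ convexHull ℝ (s + t) := by
    rw [convexHull_add]
    exact add_mem_add ha hb
  simpa only [mem_preimage, add_assoc] using hsub hab

theorem mem_convexHull_sign_mul_of_abs_le {h e : ι → ℝ} (he : ∀ i, |e i| ≤ h i) :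
    e ∈ convexHull ℝ (range fun σ : ι → Bool => fun i => (if σ i then 1 else -1) * h i) := by
  have hbox : e ∈ univ.pi fun i => convexHull ℝ {-h i, h i} := fun i _ => by
    change e i ∈ convexHull ℝ {-h i, h i}
    rw [convexHull_pair, segment_eq_Icc (by linarith [abs_nonneg (e i), he i])]
    exact abs_le.mp (he i)
  rw [← convexHull_pi] at hbox
  refine convexHull_mono ?_ hbox
  intro v hv
  refine ⟨fun i => decide (v i = h i), funext fun i => ?_⟩
  change (if decide (v i = h i) then 1 else -1) * h i = v i
  by_cases hvi : v i = h i
  · simp [hvi]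
  · rw [decide_eq_false hvi, (hv i trivial).resolve_right hvi]
    simp

theorem mulVec_mem_convexHull_range {ν : Type*} (E : Matrix ι' ι ℝ) {wv : ν → ι → ℝ} {w : ι → ℝ}
    (hw : w ∈ convexHull ℝ (range wv)) : E *ᵥ w ∈ convexHull ℝ (range fun j => E *ᵥ wv j) := by
  rw [range_comp' (E *ᵥ ·) wv]
  change E *ᵥ w ∈ convexHull ℝ (mulVecLin E '' range wv)
  rw [← (mulVecLin E).image_convexHull]
  exact mem_image_of_mem _ hw

theorem fromRows_fromRows_mulVec_add_sumElim {m₁ m₂ : Type*} (L : Matrix m₁ ι ℝ)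
    (F : Matrix m₂ ι ℝ) (z : ι → ℝ) (c : m₁ → ℝ) (l : m₂ → ℝ) :
    fromRows (fromRows L F) (0 : Matrix (Fin 1) ι ℝ) *ᵥ z + Sum.elim (Sum.elim c l) 1 =
      Sum.elim (Sum.elim (L *ᵥ z + c) (F *ᵥ z + l)) 1 := by
  ext ((i | i) | i) <;> simp [fromRows_mulVec]

theorem sumElim_quadForm_le_of_posSemidef_block3 [DecidableEq ι] {m₁ m₂ : Type*} [Fintype m₁]
    [Fintype m₂] {q : ℕ} {γ θ : ℝ} (hγ : 0 ≤ γ) {S : Matrix (Fin q) ((m₁ ⊕ m₂) ⊕ Fin 1) ℝ}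
    {L : Matrix m₁ ι ℝ} {F : Matrix m₂ ι ℝ} {c x : m₁ → ℝ} {l u : m₂ → ℝ}
    (h : (block3 (γ • 1) 0 (S * fromRows (fromRows L F) 0)ᵀ 0 (sc (θ - γ))
      (rowV (S *ᵥ Sum.elim (Sum.elim c l) 1)) (S * fromRows (fromRows L F) 0)
      (colV (S *ᵥ Sum.elim (Sum.elim c l) 1)) 1).PosSemidef)
    {z : ι → ℝ} (hz : z ⬝ᵥ z ≤ 1) (hx : L *ᵥ z + c = x) (hu : F *ᵥ z + l = u) :
    Sum.elim (Sum.elim x u) 1 ⬝ᵥ (Sᵀ * S) *ᵥ Sum.elim (Sum.elim x u) 1 ≤ θ := by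
  rw [← hx, ← hu, ← fromRows_fromRows_mulVec_add_sumElim, ← mulVec_mulVec, dotProduct_mulVec,
    vecMul_transpose, mulVec_add, mulVec_mulVec]
  exact dotProduct_self_le_of_posSemidef_block3 hγ h hz

end

theorem corollary_one_general {n m d q Nw Nu : ℕ}
    (f : (Fin n → ℝ) → (Fin m → ℝ) → (Fin d → ℝ) → (Fin n → ℝ))
    (p : Fin Nu → ℕ) (Umat : (k : Fin Nu) → Matrix (Fin (p k)) (Fin m) ℝ)
    (wv : Fin Nw → (Fin d → ℝ))
    (c cp : Fin n → ℝ)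
    (Pp : Matrix (Fin n) (Fin n) ℝ) (hPp : Pp.PosDef)
    (ubar : Fin m → ℝ)
    (A : Matrix (Fin n) (Fin n) ℝ) (B : Matrix (Fin n) (Fin m) ℝ)
    (E : Matrix (Fin n) (Fin d) ℝ) (g : Fin n → ℝ)
    (Lv : Fin n → ℝ) (hLv : ∀ i, 0 ≤ Lv i)
    (hlin : ∀ x u w, ∀ i,
      |f x u w i - (A.mulVec x + B.mulVec u + E.mulVec w + g) i| ≤
        (1 / 2) * Lv i * (eunorm (x - c) ^ 2 + eunorm (u - ubar) ^ 2 + eunorm w ^ 2))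
    (L : Matrix (Fin n) (Fin n) ℝ) (hL : L.PosDef)
    (F : Matrix (Fin m) (Fin n) ℝ) (l : Fin m → ℝ)
    (δX δU δW : ℝ) (hδX : 0 ≤ δX)
    (hδW : IsGreatest (Set.range fun j => eunorm (wv j) ^ 2) δW)
    (φ : ℝ) (hφ : 0 ≤ φ)
    (β : (Fin n → Bool) → Fin Nw → ℝ) (hβ : ∀ σ j, 0 ≤ β σ j)
    (τ : Fin Nu → ℝ) (hτ : ∀ k, 0 ≤ τ k)
    (μ : Fin n → ℝ) (hμ : μ = g + A.mulVec c + B.mulVec l - cp)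
    (r2 : ℝ) (hr2 : r2 = δX + δU + δW)
    (V : (Fin n → Bool) → (Fin n → ℝ))
    (hV : ∀ σ i, V σ i = (if σ i then 1 else -1) * ((1 / 2) * Lv i * r2))
    (h16 : (fromBlocks (1 : Matrix (Fin n) (Fin n) ℝ) L L
      (δX • (1 : Matrix (Fin n) (Fin n) ℝ))).PosSemidef)
    (h17 : (block3 (φ • (1 : Matrix (Fin n) (Fin n) ℝ)) 0 Fᵀ
        0 (sc (δU - φ)) (rowV (l - ubar))
        F (colV (l - ubar)) (1 : Matrix (Fin m) (Fin m) ℝ)).PosSemidef)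
    (h18 : ∀ (σ : Fin n → Bool) (j : Fin Nw),
      (block3 (β σ j • (1 : Matrix (Fin n) (Fin n) ℝ)) 0 (A * L + B * F)ᵀ
        0 (sc (1 - β σ j)) (rowV (μ + V σ + E.mulVec (wv j)))
        (A * L + B * F) (colV (μ + V σ + E.mulVec (wv j))) Pp⁻¹).PosSemidef)
    (h19 : ∀ k : Fin Nu,
      (block3 (τ k • (1 : Matrix (Fin n) (Fin n) ℝ)) 0 (Umat k * F)ᵀ
        0 (sc (1 - τ k)) (rowV ((Umat k).mulVec l))
        (Umat k * F) (colV ((Umat k).mulVec l))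
        (1 : Matrix (Fin (p k)) (Fin (p k)) ℝ)).PosSemidef)
    (S : Matrix (Fin q) ((Fin n ⊕ Fin m) ⊕ Fin 1) ℝ)
    (Q : Matrix ((Fin n ⊕ Fin m) ⊕ Fin 1) ((Fin n ⊕ Fin m) ⊕ Fin 1) ℝ)
    (hQ : Q = Sᵀ * S)
    (J : (Fin n → ℝ) → (Fin m → ℝ) → ℝ)
    (hJ : ∀ x u, J x u =
      (Sum.elim (Sum.elim x u) 1) ⬝ᵥ Q.mulVec (Sum.elim (Sum.elim x u) 1))
    (M : Matrix ((Fin n ⊕ Fin m) ⊕ Fin 1) (Fin n) ℝ)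
    (hM : M = fromRows (fromRows L F) 0)
    (vstack : (Fin n ⊕ Fin m) ⊕ Fin 1 → ℝ) (hvstack : vstack = Sum.elim (Sum.elim c l) 1)
    (γ Jt : ℝ) (hγ : 0 ≤ γ)
    (hcost : (block3 (γ • (1 : Matrix (Fin n) (Fin n) ℝ)) 0 (S * M)ᵀ
        0 (sc (Jt - γ)) (rowV (S.mulVec vstack))
        (S * M) (colV (S.mulVec vstack)) (1 : Matrix (Fin q) (Fin q) ℝ)).PosSemidef)
    (κ : (Fin n → ℝ) → (Fin m → ℝ))
    (hκ : ∀ x, κ x = (F * L⁻¹).mulVec (x - c) + l) :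
    ∀ x ∈ Ellip c (L ^ 2)⁻¹,
      J x (κ x) ≤ Jt ∧
        (∀ k, eunorm ((Umat k).mulVec (κ x)) ≤ 1) ∧
        (∀ w ∈ convexHull ℝ (Set.range wv), f x (κ x) w ∈ Ellip cp Pp) := by
  intro x hx
  set z := L⁻¹ *ᵥ (x - c)
  have hz : z ⬝ᵥ z ≤ 1 := dotProduct_self_le_one_of_mem_ellip_inv_sq hL.1 hx
  have hLz : L *ᵥ z = x - c := by
    rw [mulVec_mulVec, mul_nonsing_inv _ ((isUnit_iff_isUnit_det L).mp hL.isUnit), one_mulVec]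
  have hκz : κ x = F *ᵥ z + l := by rw [hκ, ← mulVec_mulVec]
  refine ⟨?_, fun k => ?_, fun w hw => ?_⟩
  · rw [hJ, hQ]
    subst hM hvstack
    exact sumElim_quadForm_le_of_posSemidef_block3 hγ hcost hz (by rw [hLz, sub_add_cancel])
      hκz.symm
  · refine eunorm_le_one_of_dotProduct_self_le_one ?_
    simpa only [hκz, mulVec_add, mulVec_mulVec] using
      dotProduct_self_le_of_posSemidef_block3 (hτ k) (h19 k) hz
  · have hbX : eunorm (x - c) ^ 2 ≤ δX := by
      rw [eunorm_sq, ← hLz]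
      exact mulVec_dotProduct_self_le_of_posSemidef_fromBlocks hδX h16 hz
    have hbU : eunorm (κ x - ubar) ^ 2 ≤ δU := by
      simpa only [eunorm_sq, hκz, add_sub_assoc] using
        dotProduct_self_le_of_posSemidef_block3 hφ h17 hz
    have hbW : eunorm w ^ 2 ≤ δW := eunorm_sq_le_of_mem_convexHull (fun j => hδW.2 ⟨j, rfl⟩) hw
    have herr : f x (κ x) w - (A *ᵥ x + B *ᵥ κ x + E *ᵥ w + g) ∈ convexHull ℝ (range V) := by
      rw [show V = _ from funext fun σ => funext (hV σ)]
      refine mem_convexHull_sign_mul_of_abs_le fun i => (hlin x (κ x) w i).trans ?_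
      exact mul_le_mul_of_nonneg_left (by linarith) (mul_nonneg (by norm_num) (hLv i))
    have hlinpart : (A * L + B * F) *ᵥ z + μ = A *ᵥ x + B *ᵥ κ x + g - cp := by
      rw [hμ, hκz, add_mulVec, ← mulVec_mulVec, ← mulVec_mulVec, hLz, mulVec_sub, mulVec_add]
      abel
    have hvertex : ∀ v ∈ range V, ∀ e ∈ range fun j => E *ᵥ wv j,
        cp + ((A * L + B * F) *ᵥ z + μ) + v + e ∈ Ellip cp Pp := by
      rintro _ ⟨σ, rfl⟩ _ ⟨j, rfl⟩
      simpa only [add_assoc] using add_mem_ellip_of_posSemidef_block3 (hβ σ j) hPp (h18 σ j) hz cp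
    convert add_add_mem_of_mem_convexHull (convex_ellip hPp.posSemidef cp) hvertex herr
      (mulVec_mem_convexHull_range E hw) using 1
    rw [hlinpart]
    abel

/-- **Corollary 1 (correctness of a feasible point of the local optimization problem)**:
under the linearization-error bound, if the LMIs (16)–(19) together with the cost LMI
hold, then the affine controller `κ(x) = F L⁻¹ (x − c) + l` satisfies (i) `𝒥̃` bounds
the stage cost on `E(c, L⁻²)`, (ii) its inputs are admissible, and (iii) it maps
`E(c, L⁻²)` into `E(c₊, P₊)` for every disturbance in `conv{w₁,…,w_{N_w}}`. -/
theorem corollary_one {n m d q Nw Nu : ℕ}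
    (f : (Fin n → ℝ) → (Fin m → ℝ) → (Fin d → ℝ) → (Fin n → ℝ))
    (p : Fin Nu → ℕ) (Umat : (k : Fin Nu) → Matrix (Fin (p k)) (Fin m) ℝ)
    (wv : Fin Nw → (Fin d → ℝ))
    (hW0 : (0 : Fin d → ℝ) ∈ convexHull ℝ (Set.range wv))
    (c cp : Fin n → ℝ)
    (Pp : Matrix (Fin n) (Fin n) ℝ) (hPp : Pp.PosDef)
    (ubar : Fin m → ℝ) (hubar : ∀ k, eunorm ((Umat k).mulVec ubar) ≤ 1)
    (A : Matrix (Fin n) (Fin n) ℝ) (B : Matrix (Fin n) (Fin m) ℝ)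
    (E : Matrix (Fin n) (Fin d) ℝ) (g : Fin n → ℝ)
    (Lv : Fin n → ℝ) (hLv : ∀ i, 0 ≤ Lv i)
    (hlin : ∀ x u w, ∀ i,
      |f x u w i - (A.mulVec x + B.mulVec u + E.mulVec w + g) i| ≤
        (1 / 2) * Lv i * (eunorm (x - c) ^ 2 + eunorm (u - ubar) ^ 2 + eunorm w ^ 2))
    (L : Matrix (Fin n) (Fin n) ℝ) (hL : L.PosDef)
    (F : Matrix (Fin m) (Fin n) ℝ) (l : Fin m → ℝ)
    (δX δU δW : ℝ) (hδX : 0 ≤ δX) (hδU : 0 ≤ δU)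
    (hδW : IsGreatest (Set.range fun j => eunorm (wv j) ^ 2) δW)
    (φ : ℝ) (hφ : 0 ≤ φ)
    (β : (Fin n → Bool) → Fin Nw → ℝ) (hβ : ∀ σ j, 0 ≤ β σ j)
    (τ : Fin Nu → ℝ) (hτ : ∀ k, 0 ≤ τ k)
    (μ : Fin n → ℝ) (hμ : μ = g + A.mulVec c + B.mulVec l - cp)
    (r2 : ℝ) (hr2 : r2 = δX + δU + δW)
    (V : (Fin n → Bool) → (Fin n → ℝ))
    (hV : ∀ σ i, V σ i = (if σ i then 1 else -1) * ((1 / 2) * Lv i * r2))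
    (h16 : (fromBlocks (1 : Matrix (Fin n) (Fin n) ℝ) L L
      (δX • (1 : Matrix (Fin n) (Fin n) ℝ))).PosSemidef)
    (h17 : (block3 (φ • (1 : Matrix (Fin n) (Fin n) ℝ)) 0 Fᵀ
        0 (sc (δU - φ)) (rowV (l - ubar))
        F (colV (l - ubar)) (1 : Matrix (Fin m) (Fin m) ℝ)).PosSemidef)
    (h18 : ∀ (σ : Fin n → Bool) (j : Fin Nw),
      (block3 (β σ j • (1 : Matrix (Fin n) (Fin n) ℝ)) 0 (A * L + B * F)ᵀ
        0 (sc (1 - β σ j)) (rowV (μ + V σ + E.mulVec (wv j)))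
        (A * L + B * F) (colV (μ + V σ + E.mulVec (wv j))) Pp⁻¹).PosSemidef)
    (h19 : ∀ k : Fin Nu,
      (block3 (τ k • (1 : Matrix (Fin n) (Fin n) ℝ)) 0 (Umat k * F)ᵀ
        0 (sc (1 - τ k)) (rowV ((Umat k).mulVec l))
        (Umat k * F) (colV ((Umat k).mulVec l))
        (1 : Matrix (Fin (p k)) (Fin (p k)) ℝ)).PosSemidef)
    (S : Matrix (Fin q) ((Fin n ⊕ Fin m) ⊕ Fin 1) ℝ)
    (Q : Matrix ((Fin n ⊕ Fin m) ⊕ Fin 1) ((Fin n ⊕ Fin m) ⊕ Fin 1) ℝ)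
    (hQ : Q = Sᵀ * S)
    (J : (Fin n → ℝ) → (Fin m → ℝ) → ℝ)
    (hJ : ∀ x u, J x u =
      (Sum.elim (Sum.elim x u) 1) ⬝ᵥ Q.mulVec (Sum.elim (Sum.elim x u) 1))
    (M : Matrix ((Fin n ⊕ Fin m) ⊕ Fin 1) (Fin n) ℝ)
    (hM : M = fromRows (fromRows L F) 0)
    (vstack : (Fin n ⊕ Fin m) ⊕ Fin 1 → ℝ) (hvstack : vstack = Sum.elim (Sum.elim c l) 1)
    (γ Jt : ℝ) (hγ : 0 ≤ γ)
    (hcost : (block3 (γ • (1 : Matrix (Fin n) (Fin n) ℝ)) 0 (S * M)ᵀ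
        0 (sc (Jt - γ)) (rowV (S.mulVec vstack))
        (S * M) (colV (S.mulVec vstack)) (1 : Matrix (Fin q) (Fin q) ℝ)).PosSemidef)
    (κ : (Fin n → ℝ) → (Fin m → ℝ))
    (hκ : ∀ x, κ x = (F * L⁻¹).mulVec (x - c) + l) :
    ∀ x ∈ Ellip c (L ^ 2)⁻¹,
      J x (κ x) ≤ Jt ∧
        (∀ k, eunorm ((Umat k).mulVec (κ x)) ≤ 1) ∧
        (∀ w ∈ convexHull ℝ (Set.range wv), f x (κ x) w ∈ Ellip cp Pp) :=
  corollary_one_general f p Umat wv c cp Pp hPp ubar A B E g Lv hLv hlin L hL F l δX δU δW hδX hδW φ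
    hφ β hβ τ hτ μ hμ r2 hr2 V hV h16 h17 h18 h19 S Q hQ J hJ M hM vstack hvstack γ Jt hγ hcost κ hκ
end
end
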